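/- For 0 < m < 1, K0(m) = pi/(2 * AGM(1, sqrt(1-m))), where K0(m) = integral from 0 to pi/2 of (1 - m sin^2 s)^{-1/2} ds. -/

import Mathlib

open Real Filter

/-- The coupled arithmetic-geometric mean iteration starting from \`(a, b)\`. -/
noncomputable def agmPair (a b : ℝ) : ℕ → ℝ × ℝ
  | 0 => (a, b)
  | n+1 => ((agmPair a b n).1 / 2 + (agmPair a b n).2 / 2,
      Real.sqrt ((agmPair a b n).1 * (agmPair a b n).2))

/-- The arithmetic-geometric mean of \`a\` and \`b\`, the common limit of the AGM iteration. -/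
noncomputable def agm (a b : ℝ) : ℝ :=
  limUnder Filter.atTop fun n => (agmPair a b n).1

/-- The complete elliptic integral of the first kind, as a function of the modulus `m`. -/
noncomputable def K0 (m : ℝ) : ℝ :=
  ∫ s in (0:ℝ)..(π/2), 1 / Real.sqrt (1 - m * Real.sin s ^ 2)

/-! The integral `I(a, b) = ∫₀^∞ dt / √((t² + a²)(t² + b²))` (`gaussIntegral a b`) is unchanged
when `(a, b)` is replaced by `((a + b)/2, √(ab))`: this is Landen's substitution
`t = (x - ab/x)/2`. Comparing the integrand with `1/(t² + c²)` shows that `π / (2 I(a, b))` lies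
between `a` and `b`, hence between `aₙ` and `bₙ` for every AGM iterate (as `I(aₙ, bₙ) = I(a, b)`);
since `|aₙ - bₙ| ≤ |a - b|/2ⁿ`, it equals `agm a b`. Finally `t = b tan s` turns `K0 (1 - b²)`
into `I(1, b)`. -/

open MeasureTheory Set Topology

noncomputable def gaussIntegrand (a b t : ℝ) : ℝ := 1 / √((t ^ 2 + a ^ 2) * (t ^ 2 + b ^ 2))

noncomputable def gaussIntegral (a b : ℝ) : ℝ := ∫ t in Ioi 0, gaussIntegrand a b t

lemma gaussIntegrand_le_inv_sq_add {a b c : ℝ} (hc : 0 < c) (hca : c ≤ a) (hcb : c ≤ b)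
    (t : ℝ) : gaussIntegrand a b t ≤ (t ^ 2 + c ^ 2)⁻¹ := by
  rw [gaussIntegrand, one_div]
  refine inv_anti₀ (by positivity) (Real.le_sqrt_of_sq_le ?_)
  rw [sq]
  gcongr

lemma inv_sq_add_le_gaussIntegrand {a b c : ℝ} (ha : 0 < a) (hb : 0 < b) (hac : a ≤ c)
    (hbc : b ≤ c) (t : ℝ) : (t ^ 2 + c ^ 2)⁻¹ ≤ gaussIntegrand a b t := by
  rw [gaussIntegrand, one_div]
  refine inv_anti₀ (by positivity) (Real.sqrt_le_iff.mpr ⟨by positivity, ?_⟩)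
  rw [sq (t ^ 2 + c ^ 2)]
  gcongr

lemma integrable_inv_sq_add {c : ℝ} (hc : c ≠ 0) :
    Integrable fun t : ℝ ↦ (t ^ 2 + c ^ 2)⁻¹ := by
  have h : (fun t : ℝ ↦ (t ^ 2 + c ^ 2)⁻¹) = fun t ↦ (c ^ 2)⁻¹ * (1 + (t / c) ^ 2)⁻¹ := by
    funext t; field_simp; ring
  rw [h]
  exact (integrable_inv_one_add_sq.comp_div hc).const_mul _

lemma integral_Ioi_inv_sq_add {c : ℝ} (hc : 0 < c) :
    ∫ t in Ioi (0 : ℝ), (t ^ 2 + c ^ 2)⁻¹ = π / (2 * c) := by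
  have h : ∀ t : ℝ, (t ^ 2 + c ^ 2)⁻¹ = (c ^ 2)⁻¹ * (1 + (c⁻¹ * t) ^ 2)⁻¹ := fun t ↦ by
    field_simp; ring
  simp_rw [h]
  rw [integral_const_mul, integral_comp_mul_left_Ioi (fun u ↦ (1 + u ^ 2)⁻¹) 0 (inv_pos.2 hc),
    mul_zero, integral_Ioi_inv_one_add_sq, arctan_zero, inv_inv, smul_eq_mul]
  field_simp
  ring

lemma integrable_gaussIntegrand {a b : ℝ} (ha : 0 < a) (hb : 0 < b) :
    Integrable (gaussIntegrand a b) := by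
  have hc : 0 < min a b := lt_min ha hb
  refine (integrable_inv_sq_add hc.ne').mono
    (Measurable.aestronglyMeasurable (by unfold gaussIntegrand; fun_prop)) ?_
  refine .of_forall fun t ↦ ?_
  rw [Real.norm_of_nonneg (by unfold gaussIntegrand; positivity),
    Real.norm_of_nonneg (by positivity)]
  exact gaussIntegrand_le_inv_sq_add hc (min_le_left a b) (min_le_right a b) t

lemma gaussIntegral_le {a b c : ℝ} (hc : 0 < c) (hca : c ≤ a) (hcb : c ≤ b) :
    gaussIntegral a b ≤ π / (2 * c) := by
  rw [gaussIntegral, ← integral_Ioi_inv_sq_add hc]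
  exact setIntegral_mono
    (integrable_gaussIntegrand (hc.trans_le hca) (hc.trans_le hcb)).integrableOn
    (integrable_inv_sq_add hc.ne').integrableOn (gaussIntegrand_le_inv_sq_add hc hca hcb)

lemma le_gaussIntegral {a b c : ℝ} (ha : 0 < a) (hb : 0 < b) (hac : a ≤ c) (hbc : b ≤ c) :
    π / (2 * c) ≤ gaussIntegral a b := by
  have hc : 0 < c := ha.trans_le hac
  rw [gaussIntegral, ← integral_Ioi_inv_sq_add hc]
  exact setIntegral_mono (integrable_inv_sq_add hc.ne').integrableOn
    (integrable_gaussIntegrand ha hb).integrableOn (inv_sq_add_le_gaussIntegrand ha hb hac hbc)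

lemma gaussIntegral_pos {a b : ℝ} (ha : 0 < a) (hb : 0 < b) : 0 < gaussIntegral a b :=
  (by positivity : 0 < π / (2 * max a b)).trans_le <|
    le_gaussIntegral ha hb (le_max_left a b) (le_max_right a b)

lemma pi_div_two_mul_gaussIntegral_mem_uIcc {a b : ℝ} (ha : 0 < a) (hb : 0 < b) :
    π / (2 * gaussIntegral a b) ∈ uIcc a b := by
  have hI := gaussIntegral_pos ha hb
  have hmin : 0 < min a b := lt_min ha hb
  have hlow := gaussIntegral_le hmin (min_le_left a b) (min_le_right a b)
  have hhigh := le_gaussIntegral ha hb (le_max_left a b) (le_max_right a b)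
  rw [le_div_iff₀ (by positivity)] at hlow
  rw [div_le_iff₀ (by positivity)] at hhigh
  constructor
  · rw [le_div_iff₀ (by positivity)]
    linarith
  · rw [div_le_iff₀ (by positivity)]
    linarith

lemma integral_gaussIntegrand {a b : ℝ} : ∫ t, gaussIntegrand a b t = 2 * gaussIntegral a b := by
  rw [gaussIntegral, ← integral_comp_abs]
  simp only [gaussIntegrand, sq_abs]

noncomputable def landenMap (c x : ℝ) : ℝ := (x - c / x) / 2

lemma image_landenMap {c : ℝ} (hc : 0 < c) : landenMap c '' Ioi 0 = univ := by
  refine eq_univ_of_forall fun t ↦ ?_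
  have hsq : √(t ^ 2 + c) ^ 2 = t ^ 2 + c := Real.sq_sqrt (by positivity)
  have hlt : |t| < √(t ^ 2 + c) := by
    rw [← Real.sqrt_sq_eq_abs]
    exact Real.sqrt_lt_sqrt (sq_nonneg t) (by linarith)
  have hx : 0 < t + √(t ^ 2 + c) := by linarith [neg_abs_le t]
  refine ⟨t + √(t ^ 2 + c), hx, ?_⟩
  rw [landenMap]
  field_simp
  linear_combination hsq

lemma strictMonoOn_landenMap {c : ℝ} (hc : 0 < c) :
    StrictMonoOn (landenMap c) (Ioi 0) := fun x hx y _ hxy ↦ by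
  have : c / y < c / x := div_lt_div_of_pos_left hc hx hxy
  rw [landenMap, landenMap]
  linarith

lemma hasDerivAt_landenMap {c x : ℝ} (hx : x ≠ 0) :
    HasDerivAt (landenMap c) ((1 + c / x ^ 2) / 2) x := by
  have h := ((hasDerivAt_id' x).fun_sub ((hasDerivAt_inv hx).const_mul c)).div_const 2
  simp only [← div_eq_mul_inv] at h
  exact h.congr_deriv (by field_simp; ring)

lemma landenMap_deriv_mul_gaussIntegrand {a b x : ℝ} (ha : 0 < a) (hb : 0 < b) (hx : 0 < x) :
    (1 + a * b / x ^ 2) / 2 * gaussIntegrand (a / 2 + b / 2) √(a * b) (landenMap (a * b) x)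
      = 2 * gaussIntegrand a b x := by
  have hP : 0 < (x ^ 2 + a ^ 2) * (x ^ 2 + b ^ 2) := by positivity
  have key :
      (landenMap (a * b) x ^ 2 + (a / 2 + b / 2) ^ 2) * (landenMap (a * b) x ^ 2 + √(a * b) ^ 2)
      = (x ^ 2 + a ^ 2) * (x ^ 2 + b ^ 2) * ((x ^ 2 + a * b) / (4 * x ^ 2)) ^ 2 := by
    rw [landenMap, Real.sq_sqrt (by positivity)]
    field_simp
    ring
  rw [gaussIntegrand, gaussIntegrand, key, Real.sqrt_mul hP.le, Real.sqrt_sq (by positivity)]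
  have : √((x ^ 2 + a ^ 2) * (x ^ 2 + b ^ 2)) ≠ 0 := (Real.sqrt_pos.mpr hP).ne'
  field_simp
  ring

lemma gaussIntegral_agmStep {a b : ℝ} (ha : 0 < a) (hb : 0 < b) :
    gaussIntegral (a / 2 + b / 2) √(a * b) = gaussIntegral a b := by
  have hab : 0 < a * b := mul_pos ha hb
  have hsubst := integral_image_eq_integral_abs_deriv_smul measurableSet_Ioi
    (fun x hx ↦ (hasDerivAt_landenMap (ne_of_gt hx)).hasDerivWithinAt)
    (strictMonoOn_landenMap hab).injOn (gaussIntegrand (a / 2 + b / 2) √(a * b))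
  rw [image_landenMap hab, setIntegral_univ, integral_gaussIntegrand,
    setIntegral_congr_fun measurableSet_Ioi fun x (hx : 0 < x) ↦ by
      rw [smul_eq_mul, abs_of_pos (by positivity), landenMap_deriv_mul_gaussIntegrand ha hb hx],
    integral_const_mul] at hsubst
  exact mul_left_cancel₀ two_ne_zero hsubst

lemma agmPair_pos {a b : ℝ} (ha : 0 < a) (hb : 0 < b) :
    ∀ n, 0 < (agmPair a b n).1 ∧ 0 < (agmPair a b n).2
  | 0 => ⟨ha, hb⟩
  | n + 1 => by
    obtain ⟨h1, h2⟩ := agmPair_pos ha hb n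
    exact ⟨by simp only [agmPair]; positivity, Real.sqrt_pos.2 (mul_pos h1 h2)⟩

lemma gaussIntegral_agmPair {a b : ℝ} (ha : 0 < a) (hb : 0 < b) :
    ∀ n, gaussIntegral (agmPair a b n).1 (agmPair a b n).2 = gaussIntegral a b
  | 0 => rfl
  | n + 1 => by
    obtain ⟨h1, h2⟩ := agmPair_pos ha hb n
    exact (gaussIntegral_agmStep h1 h2).trans (gaussIntegral_agmPair ha hb n)

lemma abs_agmStep_sub_le {x y : ℝ} (hx : 0 ≤ x) (hy : 0 ≤ y) :
    |x / 2 + y / 2 - √(x * y)| ≤ |x - y| / 2 := by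
  have hamgm : √(x * y) ≤ x / 2 + y / 2 :=
    Real.sqrt_le_iff.2 ⟨by positivity, by nlinarith [sq_nonneg (x - y)]⟩
  rw [abs_of_nonneg (by linarith)]
  rcases le_total x y with hxy | hyx
  · have : x ≤ √(x * y) := Real.le_sqrt_of_sq_le (by nlinarith)
    rw [abs_of_nonpos (by linarith)]
    linarith
  · have : y ≤ √(x * y) := Real.le_sqrt_of_sq_le (by nlinarith)
    rw [abs_of_nonneg (by linarith)]
    linarith

lemma abs_agmPair_sub_le {a b : ℝ} (ha : 0 < a) (hb : 0 < b) :
    ∀ n, |(agmPair a b n).1 - (agmPair a b n).2| ≤ |a - b| / 2 ^ n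
  | 0 => by simp [agmPair]
  | n + 1 => by
    obtain ⟨h1, h2⟩ := agmPair_pos ha hb n
    calc |(agmPair a b (n + 1)).1 - (agmPair a b (n + 1)).2|
        ≤ |(agmPair a b n).1 - (agmPair a b n).2| / 2 := abs_agmStep_sub_le h1.le h2.le
      _ ≤ |a - b| / 2 ^ n / 2 := by gcongr; exact abs_agmPair_sub_le ha hb n
      _ = |a - b| / 2 ^ (n + 1) := by rw [pow_succ, div_div]

lemma tendsto_agmPair_fst {a b : ℝ} (ha : 0 < a) (hb : 0 < b) :
    Tendsto (fun n ↦ (agmPair a b n).1) atTop (𝓝 (π / (2 * gaussIntegral a b))) := by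
  rw [tendsto_iff_norm_sub_tendsto_zero]
  refine squeeze_zero (fun _ ↦ norm_nonneg _) (fun n ↦ ?_)
    ((tendsto_pow_atTop_atTop_of_one_lt one_lt_two).const_div_atTop |a - b|)
  obtain ⟨h1, h2⟩ := agmPair_pos ha hb n
  have hmem := pi_div_two_mul_gaussIntegral_mem_uIcc h1 h2
  rw [gaussIntegral_agmPair ha hb n] at hmem
  calc ‖(agmPair a b n).1 - π / (2 * gaussIntegral a b)‖
      ≤ |(agmPair a b n).2 - (agmPair a b n).1| := by
        rw [Real.norm_eq_abs, abs_sub_comm]; exact abs_sub_left_of_mem_uIcc hmem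
    _ ≤ |a - b| / 2 ^ n := by rw [abs_sub_comm]; exact abs_agmPair_sub_le ha hb n

theorem gaussIntegral_eq_pi_div_agm {a b : ℝ} (ha : 0 < a) (hb : 0 < b) :
    gaussIntegral a b = π / (2 * agm a b) := by
  rw [agm, (tendsto_agmPair_fst ha hb).limUnder_eq]
  have := gaussIntegral_pos ha hb
  field_simp

lemma image_mul_tan {b : ℝ} (hb : 0 < b) : (fun s ↦ b * tan s) '' Ioo 0 (π / 2) = Ioi 0 := by
  ext x
  constructor
  · rintro ⟨s, ⟨hs0, hs⟩, rfl⟩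
    exact mul_pos hb (tan_pos_of_pos_of_lt_pi_div_two hs0 hs)
  · intro (hx : 0 < x)
    refine ⟨arctan (x / b), ⟨?_, arctan_lt_pi_div_two _⟩, ?_⟩
    · simpa using arctan_strictMono (div_pos hx hb)
    · simp only [tan_arctan]
      field_simp

lemma mul_tan_deriv_mul_gaussIntegrand {b s : ℝ} (hb : 0 < b) (hs : 0 < cos s) :
    b * (1 / cos s ^ 2) * gaussIntegrand 1 b (b * tan s) = 1 / √(1 - (1 - b ^ 2) * sin s ^ 2) := by
  have hpos : 0 < 1 - (1 - b ^ 2) * sin s ^ 2 := by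
    nlinarith [sin_sq_add_cos_sq s, sq_nonneg (b * sin s)]
  have key : ((b * tan s) ^ 2 + 1 ^ 2) * ((b * tan s) ^ 2 + b ^ 2)
      = (1 - (1 - b ^ 2) * sin s ^ 2) * (b / cos s ^ 2) ^ 2 := by
    rw [tan_eq_sin_div_cos]
    field_simp
    linear_combination (b ^ 2 * sin s ^ 2 + cos s ^ 2 + 1) * sin_sq_add_cos_sq s
  rw [gaussIntegrand, key, Real.sqrt_mul hpos.le, Real.sqrt_sq (by positivity)]
  have : √(1 - (1 - b ^ 2) * sin s ^ 2) ≠ 0 := (Real.sqrt_pos.2 hpos).ne'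
  field_simp

lemma K0_one_sub_sq {b : ℝ} (hb : 0 < b) : K0 (1 - b ^ 2) = gaussIntegral 1 b := by
  have hcos : ∀ s ∈ Ioo 0 (π / 2), 0 < cos s := fun s hs ↦
    cos_pos_of_mem_Ioo ⟨by linarith [hs.1, pi_pos], hs.2⟩
  have hsubst := integral_image_eq_integral_abs_deriv_smul measurableSet_Ioo
    (fun s hs ↦ ((hasDerivAt_tan (hcos s hs).ne').const_mul b).hasDerivWithinAt)
    (fun x hx y hy h ↦ injOn_tan ⟨by linarith [hx.1, pi_pos], hx.2⟩
      ⟨by linarith [hy.1, pi_pos], hy.2⟩ (mul_left_cancel₀ hb.ne' h))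
    (gaussIntegrand 1 b)
  rw [image_mul_tan hb, setIntegral_congr_fun measurableSet_Ioo fun s hs ↦ by
    rw [smul_eq_mul, abs_of_pos (by have := hcos s hs; positivity),
      mul_tan_deriv_mul_gaussIntegrand hb (hcos s hs)]] at hsubst
  rw [gaussIntegral, hsubst, K0, intervalIntegral.integral_of_le (by positivity),
    integral_Ioc_eq_integral_Ioo]

theorem elliptic_K_agm_general (m : ℝ) (hm1 : m < 1) :
    K0 m = π / (2 * agm 1 (Real.sqrt (1 - m))) := by
  have hb : 0 < √(1 - m) := Real.sqrt_pos.2 (by linarith)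
  have h := K0_one_sub_sq hb
  rw [Real.sq_sqrt (by linarith), sub_sub_cancel] at h
  rw [h, gaussIntegral_eq_pi_div_agm one_pos hb]

theorem elliptic_K_agm (m : ℝ) (hm0 : 0 < m) (hm1 : m < 1) :
    K0 m = π / (2 * agm 1 (Real.sqrt (1 - m))) :=
  elliptic_K_agm_general m hm1
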